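/- arXiv:1711.01070 — 2 statements merged into one kernel-verified Lean document; each statement's English description precedes it below -/
import Mathlib

section
/- Let w : ℝ → [0,1] satisfy: w(τ) = 0 for τ ∉ [0,1], w is symmetric about 1/2 (w(τ) = w(1−τ)), w is nondecreasing on [0, 1/2], and w(τ) > 0 for all τ in some neighbourhood of 1/2. Define w_b(i) = w((i − 0.5)/b) for i = 1,…,b. Then for every fixed h ≥ 0, W_h/‖w_b‖² → 1 as b → ∞, where W_h = Σ_{i=1}^{b−h} w_b(i) w_b(i+h) and ‖w_b‖² = Σ_{i=1}^b w_b(i)². -/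
/-!
Write `a i = w ((i - 1/2) / b)`. Symmetry and monotonicity of `w` make `a` unimodal with its peak
at `(b + 1) / 2`, so left of the peak `a i * a (i + h) ≥ a i ^ 2` and right of it
`a i * a (i + h) ≥ a (i + h) ^ 2`; only the `2h` squares around the peak are lost, whence
`‖w_b‖² - 2h ≤ W_h ≤ ‖w_b‖²` (the upper bound by AM-GM). Positivity of `w` near `1/2` makes
`‖w_b‖²` grow linearly in `b`, so the ratio tends to `1`.
-/

open Filter Finset Topology

lemma sum_Ioc_comp_add_right (f : ℕ → ℝ) (l u h : ℕ) :
    ∑ i ∈ Ioc l u, f (i + h) = ∑ j ∈ Ioc (l + h) (u + h), f j := by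
  rw [← map_add_right_Ioc, sum_map]
  rfl

section ShiftedProducts

variable (a : ℕ → ℝ)

lemma sum_mul_shift_le_sum_sq (n h : ℕ) :
    ∑ i ∈ Ioc 0 (n - h), a i * a (i + h) ≤ ∑ i ∈ Ioc 0 n, a i ^ 2 := by
  have hleft : ∑ i ∈ Ioc 0 (n - h), a i ^ 2 ≤ ∑ i ∈ Ioc 0 n, a i ^ 2 :=
    sum_le_sum_of_subset_of_nonneg (Ioc_subset_Ioc le_rfl (Nat.sub_le n h))
      fun i _ _ => sq_nonneg _
  have hright : ∑ i ∈ Ioc 0 (n - h), a (i + h) ^ 2 ≤ ∑ i ∈ Ioc 0 n, a i ^ 2 := by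
    rw [sum_Ioc_comp_add_right (a · ^ 2)]
    refine sum_le_sum_of_subset_of_nonneg (fun i hi => ?_) fun i _ _ => sq_nonneg _
    simp only [mem_Ioc] at hi ⊢
    omega
  have hamgm : ∑ i ∈ Ioc 0 (n - h), a i * a (i + h) ≤
      ∑ i ∈ Ioc 0 (n - h), (a i ^ 2 + a (i + h) ^ 2) / 2 :=
    sum_le_sum fun i _ => by nlinarith [sq_nonneg (a i - a (i + h))]
  rw [← sum_div, sum_add_distrib] at hamgm
  linarith

lemma sum_sq_sub_le_sum_mul_shift {m n h : ℕ} (ha : ∀ i, a i ∈ Set.Icc (0 : ℝ) 1)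
    (hmono : MonotoneOn a (Set.Icc 1 m)) (hanti : AntitoneOn a (Set.Icc (m + 1) n))
    (hhm : h ≤ m) (hmn : m + h ≤ n) :
    ∑ i ∈ Ioc 0 n, a i ^ 2 - 2 * h ≤ ∑ i ∈ Ioc 0 (n - h), a i * a (i + h) := by
  have h0 : ∀ i, 0 ≤ a i := fun i => (ha i).1
  have hrise : ∑ i ∈ Ioc 0 (m - h), a i ^ 2 ≤ ∑ i ∈ Ioc 0 (m - h), a i * a (i + h) := by
    refine sum_le_sum fun i hi => ?_
    rw [mem_Ioc] at hi
    have : a i ≤ a (i + h) :=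
      hmono ⟨by omega, by omega⟩ ⟨by omega, by omega⟩ (Nat.le_add_right i h)
    nlinarith [h0 i]
  have hfall : ∑ j ∈ Ioc (m + h) n, a j ^ 2 ≤ ∑ i ∈ Ioc m (n - h), a i * a (i + h) := by
    rw [show n = n - h + h by omega, ← sum_Ioc_comp_add_right (a · ^ 2), Nat.add_sub_cancel]
    refine sum_le_sum fun i hi => ?_
    rw [mem_Ioc] at hi
    have : a (i + h) ≤ a i :=
      hanti ⟨by omega, by omega⟩ ⟨by omega, by omega⟩ (Nat.le_add_right i h)
    nlinarith [h0 (i + h)]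
  have hpeak : ∑ i ∈ Ioc (m - h) (m + h), a i ^ 2 ≤ 2 * h := by
    calc ∑ i ∈ Ioc (m - h) (m + h), a i ^ 2
        ≤ #(Ioc (m - h) (m + h)) • (1 : ℝ) :=
          sum_le_card_nsmul _ _ _ fun i _ => pow_le_one₀ (h0 i) (ha i).2
      _ = 2 * h := by
          rw [Nat.card_Ioc, nsmul_one, show m + h - (m - h) = 2 * h by omega]
          push_cast; ring
  have hgap : 0 ≤ ∑ i ∈ Ioc (m - h) m, a i * a (i + h) :=
    sum_nonneg fun i _ => mul_nonneg (h0 i) (h0 (i + h))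
  rw [← sum_Ioc_consecutive _ (Nat.zero_le (m + h)) hmn,
    ← sum_Ioc_consecutive _ (Nat.zero_le (m - h)) (by omega : m - h ≤ m + h),
    ← sum_Ioc_consecutive _ (Nat.zero_le m) (by omega : m ≤ n - h),
    ← sum_Ioc_consecutive _ (Nat.zero_le (m - h)) (Nat.sub_le m h)]
  linarith

end ShiftedProducts

lemma tendsto_div_nhds_one_of_sub_le_of_le {α : Type*} {l : Filter α} {N S : α → ℝ} (C : ℝ)
    (hS : Tendsto S l atTop) (hlow : ∀ᶠ x in l, S x - C ≤ N x) (hup : ∀ᶠ x in l, N x ≤ S x) :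
    Tendsto (fun x => N x / S x) l (𝓝 1) := by
  have hlim : Tendsto (fun x => 1 - C / S x) l (𝓝 1) := by
    simpa using tendsto_const_nhds.sub (tendsto_const_nhds.div_atTop hS)
  refine tendsto_of_tendsto_of_tendsto_of_le_of_le' hlim tendsto_const_nhds ?_ ?_
  · filter_upwards [hlow, hS.eventually_gt_atTop 0] with x hx hSx
    rw [one_sub_div hSx.ne']
    gcongr
  · filter_upwards [hup, hS.eventually_gt_atTop 0] with x hx hSx
    exact (div_le_one hSx).2 hx

noncomputable def taperWeight (w : ℝ → ℝ) (b i : ℕ) : ℝ := w (((i : ℝ) - 0.5) / b)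

lemma taperArg_mem_Icc {b i : ℕ} (hi : 1 ≤ i) (hib : 2 * i ≤ b + 1) :
    ((i : ℝ) - 0.5) / b ∈ Set.Icc (0 : ℝ) (1 / 2) := by
  have hb : (0 : ℝ) < b := by exact_mod_cast (by omega : 0 < b)
  have hi' : (1 : ℝ) ≤ i := by exact_mod_cast hi
  have hib' : 2 * (i : ℝ) ≤ b + 1 := by exact_mod_cast hib
  constructor
  · exact div_nonneg (by linarith) hb.le
  · rw [div_le_iff₀ hb]; linarith

section Taper

variable {w : ℝ → ℝ}

lemma taperWeight_monotoneOn (hmono : MonotoneOn w (Set.Icc (0 : ℝ) (1 / 2))) (b : ℕ) :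
    MonotoneOn (taperWeight w b) (Set.Icc 1 ((b + 1) / 2)) := by
  intro i hi j hj hij
  simp only [Set.mem_Icc] at hi hj
  refine hmono (taperArg_mem_Icc hi.1 (by omega)) (taperArg_mem_Icc hj.1 (by omega)) ?_
  gcongr

lemma taperWeight_symm (hsym : ∀ τ, w τ = w (1 - τ)) {b i : ℕ} (hb : 0 < b) (hi : i ≤ b + 1) :
    taperWeight w b (b + 1 - i) = taperWeight w b i := by
  have hb' : (b : ℝ) ≠ 0 := by positivity
  rw [taperWeight, taperWeight, hsym (((i : ℝ) - 0.5) / b), Nat.cast_sub hi]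
  congr 1
  field_simp
  push_cast
  ring

lemma taperWeight_antitoneOn (hsym : ∀ τ, w τ = w (1 - τ))
    (hmono : MonotoneOn w (Set.Icc (0 : ℝ) (1 / 2))) (b : ℕ) :
    AntitoneOn (taperWeight w b) (Set.Icc ((b + 1) / 2 + 1) b) := by
  intro i hi j hj hij
  simp only [Set.mem_Icc] at hi hj
  rw [← taperWeight_symm hsym (by omega) (by omega : i ≤ b + 1),
    ← taperWeight_symm hsym (by omega) (by omega : j ≤ b + 1)]
  exact taperWeight_monotoneOn hmono b ⟨by omega, by omega⟩ ⟨by omega, by omega⟩ (by omega)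

/-- The `⌊η b⌋` weights just left of the centre are all at least `δ = w (1/2 - η) > 0`. -/
lemma tendsto_sum_taperWeight_sq_atTop (hmono : MonotoneOn w (Set.Icc (0 : ℝ) (1 / 2)))
    (hpos : ∃ ε > (0 : ℝ), ∀ τ, |τ - 1 / 2| < ε → 0 < w τ) :
    Tendsto (fun b : ℕ => ∑ i ∈ Ioc 0 b, taperWeight w b i ^ 2) atTop atTop := by
  obtain ⟨ε, hε, hwpos⟩ := hpos
  set η := min (ε / 2) (1 / 2)
  have hη : 0 < η := lt_min (half_pos hε) one_half_pos
  have hη_half : η ≤ 1 / 2 := min_le_right _ _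
  set δ := w (1 / 2 - η)
  have hδ : 0 < δ := hwpos _ <| by
    rw [sub_sub_cancel_left, abs_neg, abs_of_pos hη]
    exact (min_le_left _ _).trans_lt (half_lt_self hε)
  have hbound : ∀ b : ℕ, δ ^ 2 * ⌊η * b⌋₊ ≤ ∑ i ∈ Ioc 0 b, taperWeight w b i ^ 2 := by
    intro b
    set c := ⌊η * b⌋₊
    set m := (b + 1) / 2
    have hc : (c : ℝ) ≤ η * b := Nat.floor_le (by positivity)
    have hcm : c ≤ m := by
      have : (2 * c : ℝ) ≤ b := by nlinarith [(Nat.cast_nonneg b : (0 : ℝ) ≤ b)]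
      have : 2 * c ≤ b := by exact_mod_cast this
      omega
    have hlarge : ∀ i ∈ Ioc (m - c) m, δ ≤ taperWeight w b i := by
      intro i hi
      rw [mem_Ioc] at hi
      have hb : (0 : ℝ) < b := by exact_mod_cast (by omega : 0 < b)
      have hm : (b : ℝ) ≤ 2 * m := by exact_mod_cast (by omega : b ≤ 2 * m)
      have hi' : (m : ℝ) - c + 1 ≤ i := by
        rw [← Nat.cast_sub hcm]; exact_mod_cast (by omega : m - c + 1 ≤ i)
      refine hmono ⟨by linarith, by linarith⟩ (taperArg_mem_Icc (by omega) (by omega)) ?_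
      rw [le_div_iff₀ hb]
      nlinarith
    calc δ ^ 2 * ⌊η * b⌋₊ = #(Ioc (m - c) m) • δ ^ 2 := by
          rw [Nat.card_Ioc, Nat.sub_sub_self hcm, nsmul_eq_mul, mul_comm]
      _ ≤ ∑ i ∈ Ioc (m - c) m, taperWeight w b i ^ 2 :=
          card_nsmul_le_sum _ _ _ fun i hi => pow_le_pow_left₀ hδ.le (hlarge i hi) 2
      _ ≤ ∑ i ∈ Ioc 0 b, taperWeight w b i ^ 2 :=
          sum_le_sum_of_subset_of_nonneg (Ioc_subset_Ioc (Nat.zero_le _) (by omega))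
            fun i _ _ => sq_nonneg _
  have hfloor : Tendsto (fun b : ℕ => (⌊η * b⌋₊ : ℝ)) atTop atTop :=
    tendsto_natCast_atTop_atTop.comp <|
      tendsto_nat_floor_atTop.comp (tendsto_natCast_atTop_atTop.const_mul_atTop hη)
  exact tendsto_atTop_mono hbound (hfloor.const_mul_atTop (pow_pos hδ 2))

end Taper

theorem stmt_7_general (w : ℝ → ℝ)
    (hw01 : ∀ τ, w τ ∈ Set.Icc (0 : ℝ) 1)
    (hsym : ∀ τ, w τ = w (1 - τ))
    (hmono : MonotoneOn w (Set.Icc (0 : ℝ) (1 / 2)))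
    (hpos : ∃ ε > (0 : ℝ), ∀ τ, |τ - 1 / 2| < ε → 0 < w τ)
    (h : ℕ) :
    Tendsto
      (fun b : ℕ =>
        (∑ i ∈ Finset.Icc 1 (b - h),
            w (((i : ℝ) - 0.5) / (b : ℝ)) * w (((i : ℝ) + (h : ℝ) - 0.5) / (b : ℝ))) /
          ∑ i ∈ Finset.Icc 1 b, w (((i : ℝ) - 0.5) / (b : ℝ)) ^ 2)
      atTop (nhds 1) := by
  have hIcc : ∀ n : ℕ, Icc 1 n = Ioc 0 n := Icc_add_one_left_eq_Ioc 0
  simp only [hIcc, ← Nat.cast_add]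
  refine tendsto_div_nhds_one_of_sub_le_of_le (N := fun b => ∑ i ∈ Ioc 0 (b - h),
      taperWeight w b i * taperWeight w b (i + h)) (2 * h)
    (tendsto_sum_taperWeight_sq_atTop hmono hpos) ?_ (Eventually.of_forall fun b => ?_)
  · filter_upwards [eventually_ge_atTop (2 * h + 1)] with b hb
    exact sum_sq_sub_le_sum_mul_shift _ (fun _ => hw01 _) (taperWeight_monotoneOn hmono b)
      (taperWeight_antitoneOn hsym hmono b) (by omega) (by omega)
  · exact sum_mul_shift_le_sum_sq _ _ _

theorem stmt_7 (w : ℝ → ℝ)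
    (hw01 : ∀ τ, w τ ∈ Set.Icc (0 : ℝ) 1)
    (hsupp : ∀ τ, τ ∉ Set.Icc (0 : ℝ) 1 → w τ = 0)
    (hsym : ∀ τ, w τ = w (1 - τ))
    (hmono : MonotoneOn w (Set.Icc (0 : ℝ) (1 / 2)))
    (hpos : ∃ ε > (0 : ℝ), ∀ τ, |τ - 1 / 2| < ε → 0 < w τ)
    (h : ℕ) :
    Tendsto
      (fun b : ℕ =>
        (∑ i ∈ Finset.Icc 1 (b - h),
            w (((i : ℝ) - 0.5) / (b : ℝ)) * w (((i : ℝ) + (h : ℝ) - 0.5) / (b : ℝ))) /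
          ∑ i ∈ Finset.Icc 1 b, w (((i : ℝ) - 0.5) / (b : ℝ)) ^ 2)
      atTop (nhds 1) :=
  stmt_7_general w hw01 hsym hmono hpos h
end

section
/- Let X_1,…,X_n be elements of a real Hilbert space H, let 1 ≤ b < n, N = n − b + 1, and define U_i = b^{−1/2}(X_i + X_{i+1} + … + X_{i+b−1}) for i = 1,…,N. Then for any y ∈ H, (1/N) Σ_{i=1}^N ⟨U_i, y⟩² = (1/N) Σ_{i=1}^n ⟨X_i,y⟩² + Σ_{h=1}^{b−1} (1 − h/b)(2/N) Σ_{i=1}^{n−h} ⟨X_i,y⟩⟨X_{i+h},y⟩ − (1/N) Σ_{s=1}^{b−1} (1 − s/b)(⟨X_s,y⟩² + ⟨X_{n−s+1},y⟩²) − (1/N) Σ_{t=1}^{b−1} Σ_{j=1}^{b−t} (1 − (j+t)/b) · 2(⟨X_j,y⟩⟨X_{j+t},y⟩ + ⟨X_{n−j+1−t},y⟩⟨X_{n−j+1},y⟩). -/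
/-!
Write `a j = ⟪X j, y⟫`. Expanding the square of a block sum by lags,
`b ⟪U i, y⟫² = Σ_{j in block i} a j ² + 2 Σ_{1 ≤ h < b} Σ_j a j a (j + h)`, where for lag `h` the
inner sum runs over the first `b - h` indices of the block. So for each lag `h` the sum over `i`
is a sum of moving-window sums of the sequence `a j a (j + h)`, `j ≤ n - h`, with windows of
length `b - h`. In such a sum every term is counted `b - h` times, except that the `j`-th term
from either end is missed by `b - h - j` windows; these deficits are the boundary corrections.
-/

open Finset

theorem sq_sum_Ico_eq_sum_sq_add_two_mul_lagged {R : Type*} [CommSemiring R] (a : ℕ → R)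
    (i m : ℕ) :
    (∑ j ∈ Ico i (i + m), a j) ^ 2 =
      ∑ j ∈ Ico i (i + m), a j ^ 2 +
        2 * ∑ h ∈ Ico 1 m, ∑ j ∈ Ico i (i + (m - h)), a j * a (j + h) := by
  induction m generalizing i with
  | zero => simp
  | succ m ih =>
    have peel : ∀ (f : ℕ → R) (k : ℕ), ∑ j ∈ Ico i (i + (k + 1)), f j =
        f i + ∑ j ∈ Ico (i + 1) (i + 1 + k), f j := fun f k => by
      rw [sum_eq_sum_Ico_succ_bot (by omega), show i + 1 + k = i + (k + 1) by omega]
    have shift : ∑ j ∈ Ico (i + 1) (i + 1 + m), a j = ∑ h ∈ Ico 1 (m + 1), a (i + h) := by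
      rw [sum_Ico_add, add_comm 1 i, add_comm (m + 1) i, add_assoc, add_comm 1 m]
    have top : ∑ h ∈ Ico 1 m, ∑ j ∈ Ico (i + 1) (i + 1 + (m - h)), a j * a (j + h) =
        ∑ h ∈ Ico 1 (m + 1), ∑ j ∈ Ico (i + 1) (i + 1 + (m - h)), a j * a (j + h) := by
      refine sum_subset (Ico_subset_Ico_right m.le_succ) fun h hh hh' => ?_
      rw [show h = m by simp at hh hh'; omega]
      simp
    have lags : ∑ h ∈ Ico 1 (m + 1), ∑ j ∈ Ico i (i + (m + 1 - h)), a j * a (j + h) =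
        a i * ∑ j ∈ Ico (i + 1) (i + 1 + m), a j +
          ∑ h ∈ Ico 1 m, ∑ j ∈ Ico (i + 1) (i + 1 + (m - h)), a j * a (j + h) := by
      rw [top, shift, mul_sum, ← sum_add_distrib]
      refine sum_congr rfl fun h hh => ?_
      rw [show m + 1 - h = m - h + 1 by simp at hh; omega, peel]
    rw [peel, peel, lags, add_sq, ih (i + 1)]
    ring

theorem card_windows_containing_add_deficits (m L j : ℕ) (hmL : m ≤ L) (hj : j ∈ Icc 1 L) :
    #{i ∈ Icc 1 (L + 1 - m) | j ∈ Ico i (i + m)} + (m - j) + (m - (L + 1 - j)) = m := by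
  have : {i ∈ Icc 1 (L + 1 - m) | j ∈ Ico i (i + m)} =
      Icc (max 1 (j + 1 - m)) (min (L + 1 - m) j) := by
    ext i
    simp only [mem_filter, mem_Icc, mem_Ico, max_le_iff, le_min_iff]
    omega
  rw [this, Nat.card_Icc]
  simp only [mem_Icc] at hj
  omega

theorem sum_window_sums {R : Type*} [CommRing R] (g : ℕ → R) {m L : ℕ} (hmL : m ≤ L) :
    ∑ i ∈ Icc 1 (L + 1 - m), ∑ j ∈ Ico i (i + m), g j =
      m * ∑ j ∈ Icc 1 L, g j - ∑ j ∈ Icc 1 m, ((m : R) - j) * (g j + g (L + 1 - j)) := by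
  have deficit : ∀ G : ℕ → R,
      ∑ j ∈ Icc 1 L, ((m - j : ℕ) : R) * G j = ∑ j ∈ Icc 1 m, ((m : R) - j) * G j := by
    intro G
    rw [← sum_subset (Icc_subset_Icc_right hmL) fun j hjL hjm => ?_]
    · refine sum_congr rfl fun j hj => ?_
      rw [Nat.cast_sub (by simp at hj; omega)]
    · rw [Nat.sub_eq_zero_of_le (by simp at hjL hjm; omega)]
      simp
  have reflect : ∑ j ∈ Icc 1 L, ((m - (L + 1 - j) : ℕ) : R) * g j =
      ∑ j ∈ Icc 1 L, ((m - j : ℕ) : R) * g (L + 1 - j) :=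
    sum_nbij' (fun j => L + 1 - j) (fun j => L + 1 - j) (by simp; omega) (by simp; omega)
      (by simp; omega) (by simp; omega) fun j hj => by
        rw [show L + 1 - (L + 1 - j) = j by simp at hj; omega]
  calc ∑ i ∈ Icc 1 (L + 1 - m), ∑ j ∈ Ico i (i + m), g j
      = ∑ j ∈ Icc 1 L, (#{i ∈ Icc 1 (L + 1 - m) | j ∈ Ico i (i + m)} : R) * g j := by
        rw [sum_comm' (t' := Icc 1 L)
          (s' := fun j => {i ∈ Icc 1 (L + 1 - m) | j ∈ Ico i (i + m)})]
        · simp only [sum_const, nsmul_eq_mul]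
        · intro i j
          simp only [mem_filter, mem_Icc, mem_Ico]
          omega
    _ = ∑ j ∈ Icc 1 L, ((m : R) - (m - j : ℕ) - (m - (L + 1 - j) : ℕ)) * g j := by
        refine sum_congr rfl fun j hj => ?_
        have hcard := congrArg (Nat.cast (R := R))
          (card_windows_containing_add_deficits m L j hmL hj)
        push_cast at hcard
        linear_combination g j * hcard
    _ = m * ∑ j ∈ Icc 1 L, g j - ∑ j ∈ Icc 1 m, ((m : R) - j) * (g j + g (L + 1 - j)) := by
        rw [← deficit, mul_sum]
        simp only [mul_add, sum_add_distrib, ← reflect, sub_mul, sum_sub_distrib]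
        ring

theorem sum_sq_block_sums {R : Type*} [CommRing R] (a : ℕ → R) {n b : ℕ} (hb : 1 ≤ b)
    (hbn : b ≤ n) :
    ∑ i ∈ Icc 1 (n - b + 1), (∑ j ∈ Icc i (i + b - 1), a j) ^ 2 =
      b * ∑ i ∈ Icc 1 n, a i ^ 2
        + 2 * ∑ h ∈ Icc 1 (b - 1), ((b : R) - h) * ∑ i ∈ Icc 1 (n - h), a i * a (i + h)
        - ∑ s ∈ Icc 1 (b - 1), ((b : R) - s) * (a s ^ 2 + a (n - s + 1) ^ 2)
        - 2 * ∑ t ∈ Icc 1 (b - 1), ∑ j ∈ Icc 1 (b - t),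
            ((b : R) - (j + t)) * (a j * a (j + t) + a (n + 1 - (j + t)) * a (n - j + 1)) := by
  have blocks : ∀ i, ∑ j ∈ Icc i (i + b - 1), a j = ∑ j ∈ Ico i (i + b), a j := fun i => by
    congr 1; ext; simp; omega
  have lags_range : Ico 1 b = Icc 1 (b - 1) := by ext; simp; omega
  have diag : ∑ i ∈ Icc 1 (n - b + 1), ∑ j ∈ Ico i (i + b), a j ^ 2 =
      b * ∑ i ∈ Icc 1 n, a i ^ 2 -
        ∑ s ∈ Icc 1 (b - 1), ((b : R) - s) * (a s ^ 2 + a (n - s + 1) ^ 2) := by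
    rw [show n - b + 1 = n + 1 - b by omega, sum_window_sums (fun j => a j ^ 2) hbn]
    congr 1
    rw [← sum_subset (Icc_subset_Icc_right (Nat.sub_le b 1)) fun s hsb hs => ?_]
    · refine sum_congr rfl fun s hs => ?_
      rw [show n + 1 - s = n - s + 1 by simp at hs; omega]
    · rw [show s = b by simp at hsb hs; omega, sub_self, zero_mul]
  have lag : ∀ h ∈ Icc 1 (b - 1),
      ∑ i ∈ Icc 1 (n - b + 1), ∑ j ∈ Ico i (i + (b - h)), a j * a (j + h) =
        ((b : R) - h) * ∑ i ∈ Icc 1 (n - h), a i * a (i + h) - ∑ j ∈ Icc 1 (b - h),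
          ((b : R) - (j + h)) * (a j * a (j + h) + a (n + 1 - (j + h)) * a (n - j + 1)) := by
    intro h hh
    simp only [mem_Icc] at hh
    rw [show n - b + 1 = n - h + 1 - (b - h) by omega,
      sum_window_sums (fun j => a j * a (j + h)) (by omega : b - h ≤ n - h),
      Nat.cast_sub (by omega)]
    congr 1
    refine sum_congr rfl fun j hj => ?_
    simp only [mem_Icc] at hj
    rw [show n - h + 1 - j = n + 1 - (j + h) by omega,
      show n + 1 - (j + h) + h = n - j + 1 by omega]
    ring
  simp only [blocks, sq_sum_Ico_eq_sum_sq_add_two_mul_lagged, sum_add_distrib, ← mul_sum,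
    lags_range]
  rw [sum_comm, sum_congr rfl lag, diag, sum_sub_distrib]
  ring


theorem stmt_11 {H : Type*} [NormedAddCommGroup H] [InnerProductSpace ℝ H]
    (n b N : ℕ) (hb : 1 ≤ b) (hbn : b < n) (hN : N = n - b + 1)
    (X : ℕ → H) (y : H)
    (U : ℕ → H) (hU : ∀ i, U i = (Real.sqrt b)⁻¹ • ∑ j ∈ Finset.Icc i (i + b - 1), X j) :
    (1 / (N : ℝ)) * ∑ i ∈ Finset.Icc 1 N, (inner ℝ (U i) y : ℝ) ^ 2 =
      (1 / (N : ℝ)) * ∑ i ∈ Finset.Icc 1 n, (inner ℝ (X i) y : ℝ) ^ 2 +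
        (∑ h ∈ Finset.Icc 1 (b - 1),
          (1 - (h : ℝ) / (b : ℝ)) * ((2 / (N : ℝ)) *
            ∑ i ∈ Finset.Icc 1 (n - h), (inner ℝ (X i) y : ℝ) * (inner ℝ (X (i + h)) y : ℝ))) -
        (1 / (N : ℝ)) * ∑ s ∈ Finset.Icc 1 (b - 1),
          (1 - (s : ℝ) / (b : ℝ)) *
            ((inner ℝ (X s) y : ℝ) ^ 2 + (inner ℝ (X (n - s + 1)) y : ℝ) ^ 2) -
        (1 / (N : ℝ)) * ∑ t ∈ Finset.Icc 1 (b - 1), ∑ j ∈ Finset.Icc 1 (b - t),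
          (1 - ((j : ℝ) + (t : ℝ)) / (b : ℝ)) *
            (2 * ((inner ℝ (X j) y : ℝ) * (inner ℝ (X (j + t)) y : ℝ) +
              (inner ℝ (X (n + 1 - (j + t))) y : ℝ) * (inner ℝ (X (n - j + 1)) y : ℝ))) := by
  subst hN
  have hb0 : (b : ℝ) ≠ 0 := Nat.cast_ne_zero.mpr (by omega)
  have hUy : ∀ i, (inner ℝ (U i) y : ℝ) ^ 2 =
      (b : ℝ)⁻¹ * (∑ j ∈ Icc i (i + b - 1), (inner ℝ (X j) y : ℝ)) ^ 2 := fun i => by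
    rw [hU, real_inner_smul_left, sum_inner, mul_pow, inv_pow, Real.sq_sqrt (Nat.cast_nonneg b)]
  have coeff : ∀ x : ℝ, 1 - x / b = (b : ℝ)⁻¹ * (b - x) := fun x => by field_simp
  rw [sum_congr rfl fun i _ => hUy i, ← mul_sum,
    sum_sq_block_sums (fun i => (inner ℝ (X i) y : ℝ)) hb hbn.le]
  -- pull the factors `b⁻¹`, `2` and `N⁻¹` out of the sums on the right
  simp only [coeff, one_div, div_eq_mul_inv (2 : ℝ), mul_assoc, mul_left_comm _ (2 : ℝ), ← mul_sum]
  simp only [mul_left_comm _ (((n - b + 1 : ℕ) : ℝ)⁻¹), ← mul_sum]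
  field_simp
end
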